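/- Let B be any function from degree distributions to the integers with B(0) = 0. Assume that for every degree distribution d the marked vertex identity 4·(f(d) − 1)·B(d) = ∑_{s+t=d} v(s)·v(t)·B(s)·B(t) holds, and the marked face identity C(f(d) − 1, 2)·B(d) = ∑_{s+t=d} (f(s) − 1)·C(v(t), 2)·B(s)·B(t) holds (identities in ℤ, where C(a,2) = a(a−1)/2 with C(a,2) = 0 for a ≤ 1). Then for every degree distribution d one has C(n(d) + 1, 2)·B(d) = C(v(d), 2)·B(d) + ∑_{s+t=d} (1 + n(s))·C(v(t), 2)·B(s)·B(t). -/

import Mathlib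

-- A degree distribution is a finitely supported function `d : ℕ → ℕ` with `d 0 = 0`
-- (modeled as `d : ℕ →₀ ℕ` together with the hypothesis `d 0 = 0`).

/-- `f(d) = ∑_{i ≥ 1} d i`, the number of faces (as an integer). -/
def fD (d : ℕ →₀ ℕ) : ℤ := d.sum fun _ k => (k : ℤ)

/-- `n(d) = ∑_{i ≥ 1} i · d i`, the number of edges (as an integer). -/
def nD (d : ℕ →₀ ℕ) : ℤ := d.sum fun i k => (i : ℤ) * (k : ℤ)

/-- `v(d) = n(d) + 2 - f(d)`, the number of vertices (Euler's formula). -/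
def vD (d : ℕ →₀ ℕ) : ℤ := nD d + 2 - fD d

/-- `C(a, 2) = a(a-1)/2`, with `C(a, 2) = 0` for `a ≤ 1`. -/
def C2 (a : ℤ) : ℤ := if a ≤ 1 then 0 else a * (a - 1) / 2

lemma two_mul_C2 {a : ℤ} (ha : 0 ≤ a) : 2 * C2 a = a * (a - 1) := by
  unfold C2
  split
  · rename_i h
    have : a = 0 ∨ a = 1 := by omega
    rcases this with h | h <;> simp [h]
  · rw [Int.mul_ediv_cancel']
    have h := Int.even_mul_succ_self (a - 1)
    have : (a - 1) * (a - 1 + 1) = a * (a - 1) := by ring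
    rw [this] at h
    exact h.two_dvd

lemma C2_add {a b : ℤ} (ha : 0 ≤ a) (hb : 0 ≤ b) :
    C2 (a + b) = C2 a + C2 b + a * b := by
  have h1 := two_mul_C2 (add_nonneg ha hb)
  have h2 := two_mul_C2 ha
  have h3 := two_mul_C2 hb
  have : 2 * C2 (a + b) = 2 * (C2 a + C2 b + a * b) := by
    rw [h1]; ring_nf; linarith [h2, h3]
  linarith

lemma fD_add (s t : ℕ →₀ ℕ) : fD (s + t) = fD s + fD t := by
  unfold fD
  exact Finsupp.sum_add_index' (fun i => by simp) (fun i b₁ b₂ => by push_cast; ring)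

lemma nD_add (s t : ℕ →₀ ℕ) : nD (s + t) = nD s + nD t := by
  unfold nD
  exact Finsupp.sum_add_index' (fun i => by simp) (fun i b₁ b₂ => by push_cast; ring)

lemma fD_nonneg (d : ℕ →₀ ℕ) : 0 ≤ fD d :=
  Finset.sum_nonneg fun i _ => by positivity

lemma vD_ge_two {d : ℕ →₀ ℕ} (hd : d 0 = 0) : 2 ≤ vD d := by
  have h : 0 ≤ nD d - fD d := by
    unfold nD fD Finsupp.sum
    rw [← Finset.sum_sub_distrib]
    refine Finset.sum_nonneg fun i hi => ?_
    dsimp only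
    have hi0 : i ≠ 0 := by
      rintro rfl
      exact (Finsupp.mem_support_iff.mp hi) hd
    have : (1 : ℤ) ≤ (i : ℤ) := by exact_mod_cast Nat.one_le_iff_ne_zero.mpr hi0
    nlinarith [Int.ofNat_nonneg (d i)]
  unfold vD
  linarith

lemma fD_pos {d : ℕ →₀ ℕ} (hd : d ≠ 0) : 1 ≤ fD d := by
  obtain ⟨i, hi⟩ : ∃ i, d i ≠ 0 := by
    by_contra h
    push_neg at h
    exact hd (Finsupp.ext fun i => h i)
  have hmem : i ∈ d.support := Finsupp.mem_support_iff.mpr hi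
  have h1 : (1 : ℤ) ≤ (d i : ℤ) := by exact_mod_cast Nat.one_le_iff_ne_zero.mpr hi
  calc (1 : ℤ) ≤ (d i : ℤ) := h1
    _ ≤ fD d := Finset.single_le_sum (f := fun j => ((d j : ℤ))) (fun j _ => by positivity) hmem

theorem planar_louf_recurrence_of_marked_identities
    (B : (ℕ →₀ ℕ) → ℤ) (hB0 : B 0 = 0)
    (hvertex : ∀ d : ℕ →₀ ℕ, d 0 = 0 →
      4 * (fD d - 1) * B d =
        ∑ p ∈ Finset.HasAntidiagonal.antidiagonal d, vD p.1 * vD p.2 * B p.1 * B p.2)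
    (hface : ∀ d : ℕ →₀ ℕ, d 0 = 0 →
      C2 (fD d - 1) * B d =
        ∑ p ∈ Finset.HasAntidiagonal.antidiagonal d, (fD p.1 - 1) * C2 (vD p.2) * B p.1 * B p.2)
    (d : ℕ →₀ ℕ) (hd : d 0 = 0) :
    C2 (nD d + 1) * B d =
      C2 (vD d) * B d +
        ∑ p ∈ Finset.HasAntidiagonal.antidiagonal d, (1 + nD p.1) * C2 (vD p.2) * B p.1 * B p.2 := by
  by_cases hd0 : d = 0
  · subst hd0
    simp [hB0]
  -- facts about pairs in the antidiagonal
  have hpair : ∀ p ∈ Finset.HasAntidiagonal.antidiagonal d, p.1 0 = 0 ∧ p.2 0 = 0 := by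
    intro p hp
    have h := Finset.HasAntidiagonal.mem_antidiagonal.mp hp
    have : p.1 0 + p.2 0 = 0 := by
      have := congrArg (fun g : ℕ →₀ ℕ => g 0) h
      simpa [hd] using this
    omega
  have hsplit : ∀ p ∈ Finset.HasAntidiagonal.antidiagonal d,
      vD p.1 + vD p.2 = vD d + 2 := by
    intro p hp
    have h := Finset.HasAntidiagonal.mem_antidiagonal.mp hp
    have hf : fD p.1 + fD p.2 = fD d := by rw [← fD_add, h]
    have hn : nD p.1 + nD p.2 = nD d := by rw [← nD_add, h]
    unfold vD
    linarith
  -- the swapped sum identity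
  have hswap : ∀ g : (ℕ →₀ ℕ) × (ℕ →₀ ℕ) → ℤ,
      ∑ p ∈ Finset.HasAntidiagonal.antidiagonal d, g p = ∑ p ∈ Finset.HasAntidiagonal.antidiagonal d, g p.swap := by
    intro g
    rw [← Finset.HasAntidiagonal.map_swap_antidiagonal (n := d), Finset.sum_map]
    simp [Function.Embedding.coeFn_mk]
  set T := ∑ p ∈ Finset.HasAntidiagonal.antidiagonal d, vD p.1 * C2 (vD p.2) * B p.1 * B p.2 with hT
  -- compute 4T
  have h2T : 2 * T = ∑ p ∈ Finset.HasAntidiagonal.antidiagonal d,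
      vD p.1 * (vD p.2 * (vD p.2 - 1)) * B p.1 * B p.2 := by
    rw [hT, Finset.mul_sum]
    refine Finset.sum_congr rfl fun p hp => ?_
    have h2 := two_mul_C2 (le_trans (by norm_num) (vD_ge_two (hpair p hp).2))
    linear_combination vD p.1 * B p.1 * B p.2 * h2
  have h2T' : 2 * T = ∑ p ∈ Finset.HasAntidiagonal.antidiagonal d,
      vD p.1 * (vD p.1 - 1) * vD p.2 * B p.1 * B p.2 := by
    rw [h2T, hswap (fun p => vD p.1 * (vD p.1 - 1) * vD p.2 * B p.1 * B p.2)]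
    refine Finset.sum_congr rfl fun p hp => ?_
    simp only [Prod.fst_swap, Prod.snd_swap]
    ring
  have h4T : 4 * T = vD d * (4 * (fD d - 1) * B d) := by
    calc 4 * T = 2 * T + 2 * T := by ring
      _ = ∑ p ∈ Finset.HasAntidiagonal.antidiagonal d,
            (vD p.1 * (vD p.2 * (vD p.2 - 1)) * B p.1 * B p.2
              + vD p.1 * (vD p.1 - 1) * vD p.2 * B p.1 * B p.2) := by
          rw [Finset.sum_add_distrib, ← h2T, ← h2T']
      _ = ∑ p ∈ Finset.HasAntidiagonal.antidiagonal d, vD d * (vD p.1 * vD p.2 * B p.1 * B p.2) := by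
          refine Finset.sum_congr rfl fun p hp => ?_
          have hv := hsplit p hp
          linear_combination vD p.1 * vD p.2 * B p.1 * B p.2 * hv
      _ = vD d * ∑ p ∈ Finset.HasAntidiagonal.antidiagonal d, vD p.1 * vD p.2 * B p.1 * B p.2 := by
          rw [Finset.mul_sum]
      _ = vD d * (4 * (fD d - 1) * B d) := by rw [hvertex d hd]
  have hTval : T = vD d * (fD d - 1) * B d := by linarith
  -- rewrite the target sum
  have hsum : ∑ p ∈ Finset.HasAntidiagonal.antidiagonal d, (1 + nD p.1) * C2 (vD p.2) * B p.1 * B p.2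
      = T + C2 (fD d - 1) * B d := by
    rw [hface d hd, hT, ← Finset.sum_add_distrib]
    refine Finset.sum_congr rfl fun p hp => ?_
    have : (1 : ℤ) + nD p.1 = vD p.1 + (fD p.1 - 1) := by unfold vD; ring
    rw [this]; ring
  rw [hsum, hTval]
  -- final binomial identity
  have hv2 := vD_ge_two hd
  have hf1 := fD_pos hd0
  have hkey : C2 (nD d + 1) = C2 (vD d) + C2 (fD d - 1) + vD d * (fD d - 1) := by
    have : nD d + 1 = vD d + (fD d - 1) := by unfold vD; ring
    rw [this, C2_add (by linarith) (by linarith)]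
  rw [hkey]; ring
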